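/- arXiv:1204.5561 — 2 statements merged into one kernel-verified Lean document; each statement's English description precedes it below -/
import Mathlib

section
/- Let G be a connected finite simple graph of girth at least 6 with more than one vertex. Then G is well-covered and vertex decomposable if and only if the pendant edges of G form a perfect matching of G. -/
open SimpleGraph

variable {V : Type*} {W : Type*}

/-- The open neighborhood `N(x)` of a vertex, as a set. -/
def nbhd (G : SimpleGraph V) (x : V) : Set V := {u | G.Adj x u}

/-- The closed neighborhood `N[x]` of a vertex. -/
def closedNbhd (G : SimpleGraph V) (x : V) : Set V := insert x {u | G.Adj x u}

/-- The degree of a vertex. -/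
noncomputable def deg (G : SimpleGraph V) (x : V) : ℕ := (nbhd G x).ncard

/-- `S` is an independent set of vertices of `G`. -/
def IsIndep (G : SimpleGraph V) (S : Set V) : Prop :=
  ∀ u ∈ S, ∀ w ∈ S, ¬ G.Adj u w

/-- `S` is an independent set contained in `A`, i.e. an independent set of the
induced subgraph of `G` on `A`. -/
def IsIndepOn (G : SimpleGraph V) (A S : Set V) : Prop :=
  S ⊆ A ∧ IsIndep G S

/-- `S` is a maximal independent set of the induced subgraph of `G` on `A`. -/
def IsMaxIndepOn (G : SimpleGraph V) (A S : Set V) : Prop :=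
  IsIndepOn G A S ∧ ∀ T : Set V, IsIndepOn G A T → S ⊆ T → S = T

/-- A graph is well-covered if all its maximal independent sets have the same
cardinality. -/
def WellCovered (G : SimpleGraph V) : Prop :=
  ∀ S T : Set V, IsMaxIndepOn G Set.univ S → IsMaxIndepOn G Set.univ T →
    S.ncard = T.ncard

/-- The independence number `α(G)` of a graph. -/
noncomputable def indepNum (G : SimpleGraph V) : ℕ :=
  sSup {n : ℕ | ∃ S : Set V, IsIndep G S ∧ S.ncard = n}

/-- `VDOn G A` means: the induced subgraph of `G` on `A` is vertex decomposable,
via the recursive graph-theoretic characterization: it has no edges, or there is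
a vertex `v ∈ A` such that both `G∖v` and `G∖N[v]` (within `A`) are vertex
decomposable and no independent set of `G∖N[v]` is a maximal independent set
of `G∖v`. -/
inductive VDOn (G : SimpleGraph V) : Set V → Prop
  | no_edges (A : Set V) (h : ∀ u ∈ A, ∀ w ∈ A, ¬ G.Adj u w) : VDOn G A
  | step (A : Set V) (v : V) (hv : v ∈ A)
      (hdel : VDOn G (A \ {v}))
      (hlk : VDOn G (A \ closedNbhd G v))
      (hshed : ∀ S : Set V, IsIndepOn G (A \ closedNbhd G v) S →
        ¬ IsMaxIndepOn G (A \ {v}) S) : VDOn G A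

/-- A graph is vertex decomposable. -/
def VertexDecomposable (G : SimpleGraph V) : Prop := VDOn G Set.univ

/-- `c` lists the vertices of an `n`-cycle of `G` in cyclic order. -/
def IsCycleMap {n : ℕ} (G : SimpleGraph V) (c : ZMod n → V) : Prop :=
  Function.Injective c ∧ ∀ i : ZMod n, G.Adj (c i) (c (i + 1))

/-- A vertex is simplicial if its closed neighborhood induces a complete graph. -/
def IsSimplicial (G : SimpleGraph V) (x : V) : Prop :=
  ∀ u w : V, G.Adj x u → G.Adj x w → u ≠ w → G.Adj u w

/-- A basic 5-cycle: a 5-cycle containing no two adjacent vertices that both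
have degree at least 3 in `G`. -/
def IsBasic5Cycle (G : SimpleGraph V) (c : ZMod 5 → V) : Prop :=
  IsCycleMap G c ∧ ∀ i : ZMod 5, ¬(3 ≤ deg G (c i) ∧ 3 ≤ deg G (c (i + 1)))

/-- A basic 3-cycle: a 3-cycle containing at least one vertex of degree 2. -/
def IsBasic3Cycle (G : SimpleGraph V) (c : ZMod 3 → V) : Prop :=
  IsCycleMap G c ∧ ∃ i : ZMod 3, deg G (c i) = 2

/-- `x` belongs to a simplex of `G`, i.e. to the closed neighborhood of a
simplicial vertex. -/
def InSimplex (G : SimpleGraph V) (x : V) : Prop :=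
  ∃ v : V, IsSimplicial G v ∧ x ∈ closedNbhd G v

/-- `x` lies on a basic 5-cycle of `G`. -/
def OnBasic5Cycle (G : SimpleGraph V) (x : V) : Prop :=
  ∃ c : ZMod 5 → V, IsBasic5Cycle G c ∧ x ∈ Set.range c

/-- A basic 4-cycle, labelled so that `c 0` and `c 1` are two adjacent vertices
of degree two, and the remaining two vertices `c 2`, `c 3` each belong to a
simplex or to a basic 5-cycle of `G`.  The set `B(Q)` of such a labelled basic
4-cycle is `{c 0, c 1}`. -/
def IsBasic4Cycle (G : SimpleGraph V) (c : ZMod 4 → V) : Prop :=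
  IsCycleMap G c ∧ deg G (c 0) = 2 ∧ deg G (c 1) = 2 ∧
    (InSimplex G (c 2) ∨ OnBasic5Cycle G (c 2)) ∧
    (InSimplex G (c 3) ∨ OnBasic5Cycle G (c 3))

/-- The class `SQC`: the vertex set is partitioned by the closed neighborhoods
of `m` simplicial vertices, the vertex sets of `s` basic 5-cycles and the sets
`B(Q)` of `t` basic 4-cycles. -/
def InSQC (G : SimpleGraph V) : Prop :=
  ∃ (m s t : ℕ) (x : Fin m → V) (c : Fin s → ZMod 5 → V) (q : Fin t → ZMod 4 → V),
    (∀ i, IsSimplicial G (x i)) ∧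
    (∀ j, IsBasic5Cycle G (c j)) ∧
    (∀ k, IsBasic4Cycle G (q k)) ∧
    (∀ v : V, ∃! p : Fin m ⊕ Fin s ⊕ Fin t,
      match p with
      | Sum.inl i => v ∈ closedNbhd G (x i)
      | Sum.inr (Sum.inl j) => v ∈ Set.range (c j)
      | Sum.inr (Sum.inr k) => v = q k 0 ∨ v = q k 1)

/-- The class `SC`: the vertex set is partitioned by the closed neighborhoods
of `m` simplicial vertices and the vertex sets of `s` basic 5-cycles. -/
def InSC (G : SimpleGraph V) : Prop :=
  ∃ (m s : ℕ) (x : Fin m → V) (c : Fin s → ZMod 5 → V),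
    (∀ i, IsSimplicial G (x i)) ∧
    (∀ j, IsBasic5Cycle G (c j)) ∧
    (∀ v : V, ∃! p : Fin m ⊕ Fin s,
      match p with
      | Sum.inl i => v ∈ closedNbhd G (x i)
      | Sum.inr j => v ∈ Set.range (c j))

/-- `{u, w}` is a pendant edge of `G`: an edge incident with a vertex of
degree 1. -/
def PendantEdge (G : SimpleGraph V) (u w : V) : Prop :=
  G.Adj u w ∧ (deg G u = 1 ∨ deg G w = 1)

/-- `P(G)`: vertices incident with pendant edges. -/
def pendantVerts (G : SimpleGraph V) : Set V := {v | ∃ u, PendantEdge G v u}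

/-- `C(G)`: vertices lying on basic 5-cycles. -/
def basic5Verts (G : SimpleGraph V) : Set V := {v | OnBasic5Cycle G v}

/-- The class `PC`: `V(G) = P(G) ∪ C(G)` with `P(G) ∩ C(G) = ∅`, the basic
5-cycles partition `C(G)` (i.e. are pairwise vertex-disjoint), and the pendant
edges form a perfect matching of `P(G)`. -/
def InPC (G : SimpleGraph V) : Prop :=
  pendantVerts G ∪ basic5Verts G = Set.univ ∧
  pendantVerts G ∩ basic5Verts G = ∅ ∧
  (∀ c c' : ZMod 5 → V, IsBasic5Cycle G c → IsBasic5Cycle G c' →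
    Set.range c = Set.range c' ∨ Disjoint (Set.range c) (Set.range c')) ∧
  (∀ v ∈ pendantVerts G, ∃! u : V, PendantEdge G v u)

/-- The induced subgraph of `G` on `B` has no cut vertex: removing any vertex
of `B` leaves it (pre)connected. -/
def NoCutVertexOn (G : SimpleGraph V) (B : Set V) : Prop :=
  ∀ v ∈ B, (G.induce (B \ {v})).Preconnected

/-- `B` is (the vertex set of) a block of `G`: a maximal connected induced
subgraph without a cut vertex. -/
def IsBlockOf (G : SimpleGraph V) (B : Set V) : Prop :=
  B.Nonempty ∧ (G.induce B).Connected ∧ NoCutVertexOn G B ∧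
  ∀ B' : Set V, B ⊆ B' → (G.induce B').Connected → NoCutVertexOn G B' → B' = B

/-- The induced subgraph of `G` on `B` is complete. -/
def IsCompleteOn (G : SimpleGraph V) (B : Set V) : Prop :=
  ∀ u ∈ B, ∀ w ∈ B, u ≠ w → G.Adj u w

/-- The induced subgraph of `G` on `B` is a cycle. -/
def IsCycleOn (G : SimpleGraph V) (B : Set V) : Prop :=
  ∃ n : ℕ, 3 ≤ n ∧ ∃ c : ZMod n → V, Function.Injective c ∧ Set.range c = B ∧
    ∀ i j : ZMod n, G.Adj (c i) (c j) ↔ (j = i + 1 ∨ i = j + 1)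

/-- A block-cactus graph: every block is complete or a cycle. -/
def IsBlockCactus (G : SimpleGraph V) : Prop :=
  ∀ B : Set V, IsBlockOf G B → IsCompleteOn G B ∨ IsCycleOn G B

/-- A cactus graph: connected, and any two (distinct) cycles have at most one
vertex in common. -/
def IsCactus (G : SimpleGraph V) : Prop :=
  G.Connected ∧
  ∀ (n m : ℕ), 3 ≤ n → 3 ≤ m → ∀ (c : ZMod n → V) (c' : ZMod m → V),
    IsCycleMap G c → IsCycleMap G c' →
    Set.range c = Set.range c' ∨ (Set.range c ∩ Set.range c').Subsingleton

/-- `S` is a pendant edge of `G` incident with `v`. -/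
def IncidentPendant (G : SimpleGraph V) (v : V) (S : Set V) : Prop :=
  ∃ u, PendantEdge G v u ∧ S = {v, u}

/-- `S` is (the vertex set of) a basic 3-cycle of `G` through `v`. -/
def IncidentBasic3 (G : SimpleGraph V) (v : V) (S : Set V) : Prop :=
  ∃ c : ZMod 3 → V, IsBasic3Cycle G c ∧ Set.range c = S ∧ v ∈ S

/-- `S` is (the vertex set of) a basic 4-cycle of `G` through `v`. -/
def IncidentBasic4 (G : SimpleGraph V) (v : V) (S : Set V) : Prop :=
  ∃ c : ZMod 4 → V, IsBasic4Cycle G c ∧ Set.range c = S ∧ v ∈ S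

/-- `S` is (the vertex set of) a basic 5-cycle of `G` through `v`. -/
def IncidentBasic5 (G : SimpleGraph V) (v : V) (S : Set V) : Prop :=
  ∃ c : ZMod 5 → V, IsBasic5Cycle G c ∧ Set.range c = S ∧ v ∈ S

/-- `H` is a minor of `G`, witnessed by pairwise disjoint connected branch
sets. -/
def IsMinorOf (H : SimpleGraph W) (G : SimpleGraph V) : Prop :=
  ∃ f : W → Set V,
    (∀ w, (G.induce (f w)).Connected) ∧
    (∀ w w', w ≠ w' → Disjoint (f w) (f w')) ∧
    (∀ w w', H.Adj w w' → ∃ a ∈ f w, ∃ b ∈ f w', G.Adj a b)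

/-- Planarity, via Wagner's characterization: a graph is planar iff it has
neither `K₅` nor `K₃,₃` as a minor. -/
def IsPlanar (G : SimpleGraph V) : Prop :=
  ¬ IsMinorOf (⊤ : SimpleGraph (Fin 5)) G ∧
  ¬ IsMinorOf (completeBipartiteGraph (Fin 3) (Fin 3)) G

/-- The class `W₂`: a well-covered graph such that deleting any vertex leaves a
well-covered graph with the same independence number. -/
def InW2 (G : SimpleGraph V) : Prop :=
  WellCovered G ∧ ∀ x : V,
    WellCovered (G.induce ({x}ᶜ : Set V)) ∧
    _root_.indepNum (G.induce ({x}ᶜ : Set V)) = _root_.indepNum G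

/-- The edge relation of the graph `G_n`, on vertex labels `1, …, 3n-1`
(the vertex `x_i` has label `i`). -/
def gnRel (n : ℕ) (a b : ℕ) : Prop :=
  (a = 1 ∧ b = 2) ∨
  (∃ k : ℕ, 1 ≤ k ∧ k ≤ n - 1 ∧
    ((a = 3 * k - 1 ∧ b = 3 * k) ∨ (a = 3 * k ∧ b = 3 * k + 1) ∨
     (a = 3 * k + 1 ∧ b = 3 * k + 2) ∨ (a = 3 * k + 2 ∧ b = 3 * k - 2))) ∨
  (∃ l : ℕ, 2 ≤ l ∧ l ≤ n - 1 ∧ a = 3 * l - 3 ∧ b = 3 * l)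

/-- The graph `G_n`, with vertex set `{x_1, …, x_{3n-1}}`; the vertex `x_i` is
represented by the element of `Fin (3*n-1)` with value `i - 1`. -/
def Gn (n : ℕ) : SimpleGraph (Fin (3 * n - 1)) :=
  SimpleGraph.fromRel (fun a b => gnRel n (a.1 + 1) (b.1 + 1))

/-- The graph `H_n = G_n ∖ x_{3n-1}`, with vertex set `{x_1, …, x_{3n-2}}`;
the vertex `x_i` is represented by the element of `Fin (3*n-2)` with value
`i - 1`. -/
def Hn (n : ℕ) : SimpleGraph (Fin (3 * n - 2)) :=
  SimpleGraph.fromRel (fun a b => gnRel n (a.1 + 1) (b.1 + 1))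

/-!
If every non-isolated vertex is a leaf or a support vertex (adjacent to a leaf), then a support
vertex `v` is a shedding vertex (its leaf is isolated in `G ∖ v`) and the property survives in
`G ∖ v` and `G ∖ N[v]`, so the graph is vertex decomposable. When the pendant edges form a perfect
matching, every maximal independent set contains exactly one end of each of them, so all have
`|V| / 2` vertices.

Conversely, follow a vertex decomposition of a well-covered graph of girth at least 6. A shedding
vertex `v` must be a support vertex: otherwise each neighbour `u` of `v` has a further neighbour
`z u`, and by the girth bound these form an independent set at distance two from `v`, which
extends to a maximal independent set of `G ∖ N[v]` that is also maximal in `G ∖ v`. The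
leaf-or-support property then lifts from `G ∖ v` to `G` by an exchange argument: in a
well-covered graph, two distinct private neighbours of a vertex of a maximal independent set are
adjacent. The same exchange shows that no support vertex carries two leaves.
-/

section

open Set

variable {G : SimpleGraph V} {A B M S : Set V} {a b c d e u v w x : V}

lemma six_le_length_of_isCycle (hg : 6 ≤ G.egirth) {w : G.Walk a a} (hw : w.IsCycle) :
    6 ≤ w.length := by
  exact_mod_cast (le_egirth.mp hg) a w hw

lemma not_adj_of_path₂ (hg : 6 ≤ G.egirth) (hab : G.Adj a b) (hbc : G.Adj b c) :
    ¬ G.Adj a c := fun hca => by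
  have := six_le_length_of_isCycle hg
    ((Walk.cons_isCycle_iff (.cons hab (.cons hbc .nil)) hca.symm).2
      (by simp [hab.ne, hbc.ne, hca.ne, hbc.ne', hca.ne']))
  simp at this

lemma not_adj_of_path₃ (hg : 6 ≤ G.egirth) (hab : G.Adj a b) (hbc : G.Adj b c)
    (hcd : G.Adj c d) (hac : a ≠ c) (hbd : b ≠ d) : ¬ G.Adj a d := fun hda => by
  have := six_le_length_of_isCycle hg
    ((Walk.cons_isCycle_iff (.cons hab (.cons hbc (.cons hcd .nil))) hda.symm).2
      (by simp [hab.ne, hbc.ne, hcd.ne, hda.ne, hcd.ne', hda.ne', hac, hbd, hbd.symm]))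
  simp at this

lemma not_adj_of_path₄ (hg : 6 ≤ G.egirth) (hab : G.Adj a b) (hbc : G.Adj b c)
    (hcd : G.Adj c d) (hde : G.Adj d e) (hac : a ≠ c) (had : a ≠ d) (hbd : b ≠ d)
    (hbe : b ≠ e) (hce : c ≠ e) : ¬ G.Adj a e := fun hea => by
  have := six_le_length_of_isCycle hg
    ((Walk.cons_isCycle_iff (.cons hab (.cons hbc (.cons hcd (.cons hde .nil)))) hea.symm).2
      (by simp [hab.ne, hbc.ne, hcd.ne, hde.ne, hea.ne, hde.ne', hea.ne', hac, had, hbd, hbe,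
        hce, hbe.symm, hce.symm]))
  simp at this

lemma mem_diff_closedNbhd : x ∈ A \ closedNbhd G v ↔ x ∈ A ∧ x ≠ v ∧ ¬ G.Adj v x := by
  simp only [closedNbhd, mem_sdiff, mem_insert_iff, mem_ofPred_eq]
  tauto

lemma diff_closedNbhd_subset : A \ closedNbhd G v ⊆ A \ {v} :=
  sdiff_subset_sdiff_right (singleton_subset_iff.2 (mem_insert v _))

lemma IsIndep.mono (hS : IsIndep G S) (hMS : M ⊆ S) : IsIndep G M :=
  fun a ha b hb => hS a (hMS ha) b (hMS hb)

lemma isIndep_insert : IsIndep G (insert a S) ↔ IsIndep G S ∧ ∀ s ∈ S, ¬ G.Adj a s := by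
  simp only [IsIndep, mem_insert_iff, forall_eq_or_imp, G.irrefl, not_false_eq_true, true_and]
  exact ⟨fun h => ⟨fun b hb => (h.2 b hb).2, h.1⟩,
    fun h => ⟨h.2, fun b hb => ⟨fun hba => h.2 b hb hba.symm, h.1 b hb⟩⟩⟩

lemma isMaxIndepOn_iff :
    IsMaxIndepOn G A S ↔ IsIndepOn G A S ∧ ∀ t ∈ A, t ∉ S → ∃ s ∈ S, G.Adj t s := by
  refine ⟨fun h => ⟨h.1, fun t ht htS => ?_⟩, fun h => ⟨h.1, fun T hT hST => ?_⟩⟩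
  · by_contra! hS
    have := h.2 (insert t S) ⟨insert_subset ht h.1.1, isIndep_insert.2 ⟨h.1.2, hS⟩⟩
      (subset_insert t S)
    exact htS (this ▸ mem_insert t S)
  · refine hST.antisymm fun t ht => by_contra fun htS => ?_
    obtain ⟨s, hs, hts⟩ := h.2 t (hT.1 ht) htS
    exact hT.2 t ht s (hST hs) hts

lemma exists_isMaxIndepOn_superset [Finite V] (hS : IsIndepOn G A S) :
    ∃ M, S ⊆ M ∧ IsMaxIndepOn G A M := by
  obtain ⟨M, hM, hmax⟩ := Set.Finite.exists_maximalFor id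
    {T | IsIndepOn G A T ∧ S ⊆ T} (toFinite _) ⟨S, hS, subset_rfl⟩
  exact ⟨M, hM.2, hM.1, fun T hT hMT => hMT.antisymm (hmax ⟨hT, hM.2.trans hMT⟩ hMT)⟩

def WellCoveredOn (G : SimpleGraph V) (A : Set V) : Prop :=
  ∀ S T : Set V, IsMaxIndepOn G A S → IsMaxIndepOn G A T → S.ncard = T.ncard

lemma WellCoveredOn.ncard_le [Finite V] (hwc : WellCoveredOn G A) (hM : IsMaxIndepOn G A M)
    (hS : IsIndepOn G A S) : S.ncard ≤ M.ncard := by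
  obtain ⟨T, hST, hT⟩ := exists_isMaxIndepOn_superset hS
  exact (ncard_le_ncard hST).trans (hwc T M hT hM).le

lemma WellCoveredOn.adj_of_private_nbrs [Finite V] (hwc : WellCoveredOn G A)
    (hM : IsMaxIndepOn G A M) (hv : v ∈ M) (ha : a ∈ A) (hb : b ∈ A) (hab : a ≠ b)
    (hav : G.Adj a v) (hbv : G.Adj b v) (ha' : ∀ y ∈ M, G.Adj a y → y = v)
    (hb' : ∀ y ∈ M, G.Adj b y → y = v) : G.Adj a b := by
  by_contra hnab
  have haM : a ∉ M := fun h => hM.1.2 a h v hv hav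
  have hbM : b ∉ M := fun h => hM.1.2 b h v hv hbv
  have hind : IsIndepOn G A (insert a (insert b (M \ {v}))) := by
    refine ⟨insert_subset ha (insert_subset hb (sdiff_subset.trans hM.1.1)), ?_⟩
    refine isIndep_insert.2 ⟨isIndep_insert.2 ⟨hM.1.2.mono sdiff_subset, ?_⟩, ?_⟩
    · exact fun y hy hby => hy.2 (hb' y hy.1 hby)
    · rintro y (rfl | hy) hay
      exacts [hnab hay, hy.2 (ha' y hy.1 hay)]
  have hcard := hwc.ncard_le hM hind
  rw [ncard_insert_of_notMem (by simp [hab, haM]), ncard_insert_of_notMem (by simp [hbM]),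
    ncard_sdiff_singleton_add_one hv] at hcard
  omega

structure IsLeafOn (G : SimpleGraph V) (A : Set V) (l s : V) : Prop where
  leaf_mem : l ∈ A
  support_mem : s ∈ A
  adj : G.Adj l s
  eq_of_adj : ∀ y ∈ A, G.Adj l y → y = s

lemma IsLeafOn.mono {l s : V} (h : IsLeafOn G A l s) (hBA : B ⊆ A) (hl : l ∈ B) (hs : s ∈ B) :
    IsLeafOn G B l s :=
  ⟨hl, hs, h.adj, fun y hy => h.eq_of_adj y (hBA hy)⟩

lemma IsLeafOn.of_diff_singleton {l s : V} (h : IsLeafOn G (A \ {v}) l s) (hlv : ¬ G.Adj l v) :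
    IsLeafOn G A l s :=
  ⟨h.leaf_mem.1, h.support_mem.1, h.adj,
    fun y hy hly => h.eq_of_adj y ⟨hy, fun hyv => hlv (hyv ▸ hly)⟩ hly⟩

lemma WellCoveredOn.isLeafOn_unique [Finite V] (hwc : WellCoveredOn G A) {u₁ u₂ : V}
    (h₁ : IsLeafOn G A u₁ x) (h₂ : IsLeafOn G A u₂ x) : u₁ = u₂ := by
  by_contra hne
  obtain ⟨M, hxM, hM⟩ := exists_isMaxIndepOn_superset (G := G) (A := A) (S := {x})
    ⟨singleton_subset_iff.2 h₁.support_mem, by simp [IsIndep]⟩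
  have h₁₂ := hwc.adj_of_private_nbrs hM (hxM rfl) h₁.leaf_mem h₂.leaf_mem hne h₁.adj h₂.adj
    (fun y hy => h₁.eq_of_adj y (hM.1.1 hy)) (fun y hy => h₂.eq_of_adj y (hM.1.1 hy))
  exact G.irrefl (h₁.eq_of_adj u₂ h₂.leaf_mem h₁₂ ▸ h₂.adj)

def IsSheddingOn (G : SimpleGraph V) (A : Set V) (v : V) : Prop :=
  ∀ S : Set V, IsIndepOn G (A \ closedNbhd G v) S → ¬ IsMaxIndepOn G (A \ {v}) S

lemma IsSheddingOn.isMaxIndepOn (hv : IsSheddingOn G A v) (hM : IsMaxIndepOn G (A \ {v}) M) :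
    IsMaxIndepOn G A M := by
  refine isMaxIndepOn_iff.2 ⟨⟨hM.1.1.trans sdiff_subset, hM.1.2⟩, fun t ht htM => ?_⟩
  obtain rfl | htv := eq_or_ne t v
  · by_contra! hno
    exact hv M ⟨fun m hm => mem_diff_closedNbhd.2 ⟨(hM.1.1 hm).1, (hM.1.1 hm).2,
      fun htm => hno m hm htm⟩, hM.1.2⟩ hM
  · exact (isMaxIndepOn_iff.1 hM).2 t ⟨ht, htv⟩ htM

lemma WellCoveredOn.diff_singleton (hwc : WellCoveredOn G A) (hv : IsSheddingOn G A v) :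
    WellCoveredOn G (A \ {v}) :=
  fun S T hS hT => hwc S T (hv.isMaxIndepOn hS) (hv.isMaxIndepOn hT)

lemma IsSheddingOn.exists_isLeafOn [Finite V] (hg : 6 ≤ G.egirth) (hvA : v ∈ A)
    (hv : IsSheddingOn G A v) : ∃ u, IsLeafOn G A u v := by
  by_contra! hno
  have hz : ∀ u ∈ A, G.Adj u v → ∃ z ∈ A, G.Adj u z ∧ z ≠ v := fun u hu huv => by
    by_contra! h
    exact hno u ⟨hu, hvA, huv, h⟩
  choose! z hzA hzu hzv using hz
  have hZ : IsIndepOn G (A \ closedNbhd G v) (z '' {u | u ∈ A ∧ G.Adj u v}) := by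
    refine ⟨?_, ?_⟩
    · rintro _ ⟨u, ⟨hu, huv⟩, rfl⟩
      exact mem_diff_closedNbhd.2 ⟨hzA u hu huv, hzv u hu huv,
        not_adj_of_path₂ hg huv.symm (hzu u hu huv)⟩
    · rintro _ ⟨u₁, ⟨hu₁, hu₁v⟩, rfl⟩ _ ⟨u₂, ⟨hu₂, hu₂v⟩, rfl⟩ hz₁₂
      obtain rfl | hne := eq_or_ne u₁ u₂
      · exact G.irrefl hz₁₂
      have hu₁₂ : ¬ G.Adj u₁ u₂ := not_adj_of_path₂ hg hu₁v hu₂v.symm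
      -- `v, u₁, z u₁, z u₂, u₂` would close a 5-cycle
      exact not_adj_of_path₄ hg hu₁v.symm (hzu u₁ hu₁ hu₁v) hz₁₂ (hzu u₂ hu₂ hu₂v).symm
        (hzv u₁ hu₁ hu₁v).symm (hzv u₂ hu₂ hu₂v).symm
        (fun h => hu₁₂ (h ▸ (hzu u₂ hu₂ hu₂v).symm)) hne
        (fun h => hu₁₂ (h ▸ hzu u₁ hu₁ hu₁v)) hu₂v.symm
  obtain ⟨M, hZM, hM⟩ := exists_isMaxIndepOn_superset hZ
  refine hv M hM.1 (isMaxIndepOn_iff.2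
    ⟨⟨hM.1.1.trans diff_closedNbhd_subset, hM.1.2⟩, fun t ht htM => ?_⟩)
  by_cases htv : G.Adj t v
  · exact ⟨z t, hZM ⟨t, ⟨ht.1, htv⟩, rfl⟩, hzu t ht.1 htv⟩
  · exact (isMaxIndepOn_iff.1 hM).2 t
      (mem_diff_closedNbhd.2 ⟨ht.1, ht.2, fun h => htv h.symm⟩) htM

lemma WellCoveredOn.isLeafOn_of_isLeafOn_diff_singleton [Finite V] (hg : 6 ≤ G.egirth)
    (hwc : WellCoveredOn G A) (hu : IsLeafOn G A u v) (hxv : G.Adj x v)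
    (hx : IsLeafOn G (A \ {v}) x w) : IsLeafOn G A w x := by
  refine ⟨hx.support_mem.1, hx.leaf_mem.1, hx.adj.symm,
    fun w' hw' hww' => by_contra fun hw'x => ?_⟩
  have hwv : w ≠ v := hx.support_mem.2
  have hvw' : ¬ G.Adj v w' :=
    fun h => not_adj_of_path₃ hg hww'.symm hx.adj.symm hxv hw'x hwv h.symm
  have hw'v : w' ≠ v := fun h => not_adj_of_path₂ hg hx.adj.symm hxv (h ▸ hww')
  obtain ⟨M, hvw'M, hM⟩ := exists_isMaxIndepOn_superset (G := G) (A := A) (S := {v, w'})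
    ⟨insert_subset hu.support_mem (singleton_subset_iff.2 hw'), isIndep_insert.2
      ⟨by simp [IsIndep], by simpa using hvw'⟩⟩
  have hwM : w ∉ M := fun h => hM.1.2 w h w' (hvw'M (by simp)) hww'
  have hux : u ≠ x := by
    rintro rfl
    exact hwv (hu.eq_of_adj w hx.support_mem.1 hx.adj)
  have hx' : ∀ y ∈ M, G.Adj x y → y = v := fun y hy hxy => by_contra fun hyv =>
    hwM (hx.eq_of_adj y ⟨hM.1.1 hy, hyv⟩ hxy ▸ hy)
  have hadj := hwc.adj_of_private_nbrs hM (hvw'M (by simp)) hu.leaf_mem hx.leaf_mem.1 hux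
    hu.adj hxv (fun y hy => hu.eq_of_adj y (hM.1.1 hy)) hx'
  exact hxv.ne (hu.eq_of_adj x hx.leaf_mem.1 hadj)

def LeafOrSupportOn (G : SimpleGraph V) (A : Set V) : Prop :=
  ∀ x ∈ A, (∃ y ∈ A, G.Adj x y) → (∃ s, IsLeafOn G A x s) ∨ ∃ l, IsLeafOn G A l x

lemma LeafOrSupportOn.of_diff_singleton [Finite V] (hg : 6 ≤ G.egirth)
    (hwc : WellCoveredOn G A) (hu : IsLeafOn G A u v) (hG : LeafOrSupportOn G (A \ {v})) :
    LeafOrSupportOn G A := by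
  rintro x hx ⟨y, hy, hxy⟩
  obtain rfl | hxne := eq_or_ne x v
  · exact .inr ⟨u, hu⟩
  by_cases hxv : G.Adj x v
  · by_cases hx' : ∃ y ∈ A \ {v}, G.Adj x y
    · rcases hG x ⟨hx, hxne⟩ hx' with ⟨w, hxw⟩ | ⟨l, hlx⟩
      · exact .inr ⟨w, hwc.isLeafOn_of_isLeafOn_diff_singleton hg hu hxv hxw⟩
      · exact .inr ⟨l, hlx.of_diff_singleton (not_adj_of_path₂ hg hlx.adj hxv)⟩
    · push Not at hx'
      exact .inl ⟨v, hx, hu.support_mem, hxv,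
        fun y hy hxy => by_contra fun hyv => hx' y ⟨hy, hyv⟩ hxy⟩
  · rcases hG x ⟨hx, hxne⟩ ⟨y, ⟨hy, fun hyv => hxv (hyv ▸ hxy)⟩, hxy⟩ with
      ⟨w, hxw⟩ | ⟨l, hlx⟩
    · exact .inl ⟨w, hxw.of_diff_singleton hxv⟩
    · by_cases hlv : G.Adj l v
      · exact .inl ⟨l, hwc.isLeafOn_of_isLeafOn_diff_singleton hg hu hlv hlx⟩
      · exact .inr ⟨l, hlx.of_diff_singleton hlv⟩

lemma VDOn.leafOrSupportOn [Finite V] (hg : 6 ≤ G.egirth) (hvd : VDOn G A)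
    (hwc : WellCoveredOn G A) : LeafOrSupportOn G A := by
  induction hvd with
  | no_edges A hA => exact fun x hx ⟨y, hy, hxy⟩ => absurd hxy (hA x hx y hy)
  | step A v hv _ _ hshed ih _ =>
    obtain ⟨u, hu⟩ := IsSheddingOn.exists_isLeafOn hg hv hshed
    exact (ih (hwc.diff_singleton hshed)).of_diff_singleton hg hwc hu

lemma LeafOrSupportOn.restrict (hG : LeafOrSupportOn G A) (hu : IsLeafOn G A u v)
    (hBA : B ⊆ A \ {v}) (hB : A \ closedNbhd G v ⊆ B) : LeafOrSupportOn G B := by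
  have hBA' : B ⊆ A := hBA.trans sdiff_subset
  rintro x hx ⟨y, hy, hxy⟩
  rcases hG x (hBA' hx) ⟨y, hBA' hy, hxy⟩ with ⟨w, hxw⟩ | ⟨l, hlx⟩
  · exact .inl ⟨w, hxw.mono hBA' hx (hxw.eq_of_adj y (hBA' hy) hxy ▸ hy)⟩
  · have hlv : l ≠ v := by
      rintro rfl
      obtain rfl : u = x := hlx.eq_of_adj u hu.leaf_mem hu.adj.symm
      exact (hBA hy).2 (hu.eq_of_adj y (hBA' hy) hxy)
    have hvl : ¬ G.Adj v l := fun h => (hBA hx).2 (hlx.eq_of_adj v hu.support_mem h.symm).symm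
    exact .inr ⟨l, hlx.mono hBA' (hB (mem_diff_closedNbhd.2 ⟨hlx.leaf_mem, hlv, hvl⟩)) hx⟩

lemma IsLeafOn.isSheddingOn (hu : IsLeafOn G A u v) : IsSheddingOn G A v := by
  intro S hS hmax
  have huS : u ∉ S := fun h => (mem_diff_closedNbhd.1 (hS.1 h)).2.2 hu.adj.symm
  obtain ⟨s, hs, hus⟩ := (isMaxIndepOn_iff.1 hmax).2 u ⟨hu.leaf_mem, hu.adj.ne⟩ huS
  exact (mem_diff_closedNbhd.1 (hS.1 hs)).2.1 (hu.eq_of_adj s (hS.1 hs).1 hus)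

lemma LeafOrSupportOn.vdOn [Finite V] (hG : LeafOrSupportOn G A) : VDOn G A := by
  induction A using WellFoundedLT.induction with
  | _ A ih =>
  by_cases hA : ∀ a ∈ A, ∀ b ∈ A, ¬ G.Adj a b
  · exact .no_edges A hA
  push Not at hA
  obtain ⟨a, ha, b, hb, hab⟩ := hA
  obtain ⟨u, v, hu⟩ : ∃ u v, IsLeafOn G A u v := by
    rcases hG a ha ⟨b, hb, hab⟩ with ⟨s, h⟩ | ⟨l, h⟩
    exacts [⟨a, s, h⟩, ⟨l, a, h⟩]
  have hdel : A \ {v} ⊂ A := sdiff_singleton_ssubset.2 hu.support_mem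
  exact .step A v hu.support_mem
    (ih _ hdel (hG.restrict hu subset_rfl diff_closedNbhd_subset))
    (ih _ (diff_closedNbhd_subset.trans_ssubset hdel)
      (hG.restrict hu diff_closedNbhd_subset subset_rfl))
    hu.isSheddingOn

lemma isLeafOn_univ_iff {l s : V} : IsLeafOn G univ l s ↔ G.Adj l s ∧ deg G l = 1 := by
  rw [deg, ncard_eq_one]
  constructor
  · intro h
    exact ⟨h.adj, s, Set.ext fun y => ⟨h.eq_of_adj y trivial, fun hy => hy ▸ h.adj⟩⟩
  · rintro ⟨hls, t, ht⟩
    have hnbhd : ∀ y, G.Adj l y ↔ y = t := fun y => Set.ext_iff.1 ht y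
    exact ⟨trivial, trivial, hls, fun y _ hy => ((hnbhd y).1 hy).trans ((hnbhd s).1 hls).symm⟩

lemma pendantEdge_iff : PendantEdge G v u ↔ IsLeafOn G univ v u ∨ IsLeafOn G univ u v := by
  simp only [PendantEdge, isLeafOn_univ_iff, G.adj_comm u v]
  tauto

lemma PendantEdge.symm (h : PendantEdge G u w) : PendantEdge G w u :=
  ⟨h.1.symm, h.2.symm⟩

lemma leafOrSupportOn_univ_of_forall_exists_pendantEdge (h : ∀ v, ∃ u, PendantEdge G v u) :
    LeafOrSupportOn G univ := by
  intro x _ _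
  obtain ⟨u, hu⟩ := h x
  exact (pendantEdge_iff.1 hu).imp (⟨u, ·⟩) (⟨u, ·⟩)

lemma two_mul_ncard_eq_of_involutive {α : Type*} [Finite α] {m : α → α}
    (hm : Function.Involutive m) {M : Set α} (hM : ∀ a, a ∈ M ↔ m a ∉ M) :
    2 * M.ncard = Nat.card α := by
  have hcompl : Mᶜ = m ⁻¹' M := by
    ext a
    rw [mem_compl_iff, mem_preimage, hM (m a), hm a]
  rw [← ncard_add_ncard_compl M, hcompl, ncard_preimage_of_injective_subset_range hm.injective
    (by simp [hm.surjective.range_eq])]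
  ring

lemma wellCovered_of_forall_existsUnique_pendantEdge [Finite V]
    (h : ∀ v, ∃! u, PendantEdge G v u) : WellCovered G := by
  choose m hm hm_unique using h
  have hinv : Function.Involutive m := fun v => (hm_unique (m v) v (hm v).symm).symm
  have hsplit : ∀ M, IsMaxIndepOn G univ M → ∀ v, v ∈ M ↔ m v ∉ M := by
    intro M hM v
    refine ⟨fun hv hmv => hM.1.2 v hv (m v) hmv (hm v).1, fun hmv => by_contra fun hv => ?_⟩
    rcases pendantEdge_iff.1 (hm v) with hl | hl
    · obtain ⟨s, hs, hvs⟩ := (isMaxIndepOn_iff.1 hM).2 v trivial hv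
      exact hmv (hl.eq_of_adj s trivial hvs ▸ hs)
    · obtain ⟨s, hs, hms⟩ := (isMaxIndepOn_iff.1 hM).2 (m v) trivial hmv
      exact hv (hl.eq_of_adj s trivial hms ▸ hs)
  intro S T hS hT
  have hS2 := two_mul_ncard_eq_of_involutive hinv (hsplit S hS)
  have hT2 := two_mul_ncard_eq_of_involutive hinv (hsplit T hT)
  omega

lemma existsUnique_pendantEdge [Finite V] (hG : LeafOrSupportOn G univ) (hwc : WellCovered G)
    (hv : ∃ y, G.Adj v y) : ∃! u, PendantEdge G v u := by
  obtain ⟨y, hy⟩ := hv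
  simp only [pendantEdge_iff]
  rcases hG v trivial ⟨y, trivial, hy⟩ with ⟨s, hs⟩ | ⟨l, hl⟩
  · refine ⟨s, .inl hs, fun u hu => hs.eq_of_adj u trivial ?_⟩
    rcases hu with h | h
    exacts [h.adj, h.adj.symm]
  · refine ⟨l, .inr hl, fun u hu => ?_⟩
    rcases hu with h | h
    · exact (h.eq_of_adj l trivial hl.adj.symm).symm
    · exact WellCoveredOn.isLeafOn_unique hwc h hl

end

/-- A connected finite simple graph of girth at least 6 with more
than one vertex is well-covered and vertex decomposable if and only if its
pendant edges form a perfect matching of `G`. -/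
theorem stmt8 {V : Type*} [Fintype V] (G : SimpleGraph V)
    (hconn : G.Connected) (hgirth : 6 ≤ G.egirth) (hcard : 1 < Fintype.card V) :
    (WellCovered G ∧ VertexDecomposable G) ↔
      (∀ v : V, ∃! u : V, PendantEdge G v u) := by
  constructor
  · rintro ⟨hwc, hvd⟩ v
    have : Nontrivial V := Fintype.one_lt_card_iff_nontrivial.mp hcard
    exact existsUnique_pendantEdge (VDOn.leafOrSupportOn hgirth hvd hwc) hwc
      (hconn.preconnected.exists_adj_of_nontrivial v)
  · intro h
    exact ⟨wellCovered_of_forall_existsUnique_pendantEdge h,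
      (leafOrSupportOn_univ_of_forall_exists_pendantEdge fun v => (h v).exists).vdOn⟩
end

section
/- For every integer n ≥ 2, the graph (G_n)_{x_1x_2} := G_n ∖ (N(x_1) ∪ N(x_2)) is isomorphic to H_{n−1}. -/
open SimpleGraph

variable {V : Type*} {W : Type*}

/-!
`G_n` is the path `x_1 ⋯ x_{3n-1}` with the chords `x_{3l-3} x_{3l}` and `x_{3k-2} x_{3k+2}`,
and `N(x_1) ∪ N(x_2) = {x_1, x_2, x_3, x_5}`. Renaming the remaining vertices
`x_{3n-1}, …, x_9, x_6, x_7, x_8, x_4` as `y_1, …, y_{3n-5}` gives `H_{n-1}`: reversing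
`x_9 ⋯ x_{3n-1}` preserves both chord families, the chords `x_6 x_9` and `x_4 x_8` become path
edges, and the path edge `x_8 x_9` and the chord `x_7 x_{11}` become the chords
`y_{3n-9} y_{3n-6}` and `y_{3n-11} y_{3n-7}`.
-/

/-- The edge `x_{i+1} x_{j+1}` (with `i < j`) of `G_n`: an edge of the path `x_1 ⋯ x_{3n-1}`,
or one of the chords `x_{3l-3} x_{3l}` and `x_{3k-2} x_{3k+2}`. -/
def GnEdge (n i j : ℕ) : Prop :=
  (j = i + 1 ∧ i + 3 ≤ 3 * n) ∨ (j = i + 3 ∧ i % 3 = 2 ∧ i + 7 ≤ 3 * n) ∨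
    (j = i + 4 ∧ i % 3 = 0 ∧ i + 6 ≤ 3 * n)

theorem gnRel_succ_or_iff {n : ℕ} (hn : 1 ≤ n) (i j : ℕ) :
    gnRel n (i + 1) (j + 1) ∨ gnRel n (j + 1) (i + 1) ↔ GnEdge n i j ∨ GnEdge n j i := by
  have forward : ∀ a b : ℕ, gnRel n (a + 1) (b + 1) → GnEdge n a b ∨ GnEdge n b a := by
    unfold GnEdge
    rintro a b (h | ⟨k, hk, hkn, h | h | h | h⟩ | ⟨l, hl, hln, h⟩)
    iterate 4 exact .inl (.inl (by omega))
    · exact .inr (.inr (.inr (by omega)))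
    · exact .inl (.inr (.inl (by omega)))
  refine ⟨fun h => h.elim (forward i j) ((forward j i) · |>.symm), ?_⟩
  have backward :
      ∀ a b : ℕ, GnEdge n a b → gnRel n (a + 1) (b + 1) ∨ gnRel n (b + 1) (a + 1) := by
    rintro a b (⟨rfl, h⟩ | ⟨rfl, hmod, h⟩ | ⟨rfl, hmod, h⟩)
    · rcases Nat.eq_zero_or_pos a with rfl | ha
      · exact .inl (.inl ⟨rfl, rfl⟩)
      · exact .inl (.inr (.inl ⟨(a + 2) / 3, by omega, by omega, by omega⟩))
    · exact .inl (.inr (.inr ⟨a / 3 + 2, by omega, by omega, by omega, by omega⟩))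
    · exact .inr (.inr (.inl ⟨a / 3 + 1, by omega, by omega, by omega⟩))
  exact fun h => h.elim (backward i j) ((backward j i) · |>.symm)

theorem fromRel_gnRel_adj_iff {n m : ℕ} (hn : 1 ≤ n) (x y : Fin m) :
    (fromRel fun a b : Fin m => gnRel n (a.1 + 1) (b.1 + 1)).Adj x y ↔
      GnEdge n x y ∨ GnEdge n y x := by
  rw [fromRel_adj, gnRel_succ_or_iff hn, and_iff_right_iff_imp, ne_eq, Fin.ext_iff]
  unfold GnEdge
  omega

theorem Gn_adj_iff {n : ℕ} (x y : Fin (3 * n - 1)) :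
    (Gn n).Adj x y ↔ GnEdge n x y ∨ GnEdge n y x :=
  fromRel_gnRel_adj_iff (by have := x.isLt; omega) x y

theorem Hn_adj_iff {n : ℕ} (x y : Fin (3 * n - 2)) :
    (Hn n).Adj x y ↔ GnEdge n x y ∨ GnEdge n y x :=
  fromRel_gnRel_adj_iff (by have := x.isLt; omega) x y

theorem Gn_adj_iff_of_val_eq_zero {n : ℕ} (hn : 2 ≤ n) {u : Fin (3 * n - 1)} (hu : u.1 = 0)
    (v : Fin (3 * n - 1)) : (Gn n).Adj u v ↔ v.1 = 1 ∨ v.1 = 4 := by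
  rw [Gn_adj_iff, hu]
  unfold GnEdge
  omega

theorem Gn_adj_iff_of_val_eq_one {n : ℕ} {u : Fin (3 * n - 1)} (hu : u.1 = 1)
    (v : Fin (3 * n - 1)) : (Gn n).Adj u v ↔ v.1 = 0 ∨ v.1 = 2 := by
  rw [Gn_adj_iff, hu]
  unfold GnEdge
  omega

theorem mem_compl_nbhd_union_iff {n : ℕ} (hn : 2 ≤ n) {u w : Fin (3 * n - 1)} (hu : u.1 = 0)
    (hw : w.1 = 1) (v : Fin (3 * n - 1)) :
    v ∈ (nbhd (Gn n) u ∪ nbhd (Gn n) w)ᶜ ↔ v.1 = 3 ∨ 5 ≤ v.1 := by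
  simp only [nbhd, Set.mem_compl_iff, Set.mem_union, Set.mem_ofPred_eq,
    Gn_adj_iff_of_val_eq_zero hn hu, Gn_adj_iff_of_val_eq_one hw]
  omega

/-- The renaming `x_{3n-1}, …, x_9, x_6, x_7, x_8, x_4 ↦ y_1, …, y_{3n-5}`, on 0-based indices. -/
def relabel (n i : ℕ) : ℕ :=
  if i = 3 then 3 * n - 6 else if i ≤ 7 then i + 3 * n - 14 else 3 * n - 2 - i

def unrelabel (n p : ℕ) : ℕ :=
  if p = 3 * n - 6 then 3 else if 3 * n ≤ p + 9 then p + 14 - 3 * n else 3 * n - 2 - p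

theorem relabel_add_six_le {n i : ℕ} (hn : 2 ≤ n) (hi : i + 2 ≤ 3 * n) :
    relabel n i + 6 ≤ 3 * n := by
  unfold relabel
  split_ifs <;> omega

theorem unrelabel_relabel {n i : ℕ} (hn : 2 ≤ n) (hi : i = 3 ∨ 5 ≤ i)
    (hi' : i + 2 ≤ 3 * n) :
    unrelabel n (relabel n i) = i := by
  unfold relabel unrelabel
  split_ifs <;> omega

theorem unrelabel_bounds {n p : ℕ} (hn : 2 ≤ n) (hp : p + 6 ≤ 3 * n) :
    (unrelabel n p = 3 ∨ 5 ≤ unrelabel n p) ∧ unrelabel n p + 2 ≤ 3 * n := by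
  unfold unrelabel
  split_ifs <;> omega

theorem relabel_unrelabel {n p : ℕ} (hn : 2 ≤ n) (hp : p + 6 ≤ 3 * n) :
    relabel n (unrelabel n p) = p := by
  unfold relabel unrelabel
  split_ifs <;> omega

theorem gnEdge_relabel_of_gnEdge {n i j : ℕ} (hn : 2 ≤ n) (hi : i = 3 ∨ 5 ≤ i)
    (hj : j = 3 ∨ 5 ≤ j) (hj' : j + 2 ≤ 3 * n) (h : GnEdge n i j) :
    GnEdge (n - 1) (relabel n i) (relabel n j) ∨ GnEdge (n - 1) (relabel n j) (relabel n i) := by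
  unfold relabel GnEdge at *
  rcases h with ⟨rfl, h⟩ | ⟨rfl, hmod, h⟩ | ⟨rfl, hmod, h⟩ <;> split_ifs <;>
    first
    | exact .inl (.inl (by omega)) | exact .inr (.inl (by omega))
    | exact .inl (.inr (.inl (by omega))) | exact .inr (.inr (.inl (by omega)))
    | exact .inl (.inr (.inr (by omega))) | exact .inr (.inr (.inr (by omega)))

theorem gnEdge_unrelabel_of_gnEdge {n p q : ℕ} (hn : 2 ≤ n) (hq : q + 6 ≤ 3 * n)
    (h : GnEdge (n - 1) p q) :
    GnEdge n (unrelabel n p) (unrelabel n q) ∨ GnEdge n (unrelabel n q) (unrelabel n p) := by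
  unfold unrelabel GnEdge at *
  rcases h with ⟨rfl, h⟩ | ⟨rfl, hmod, h⟩ | ⟨rfl, hmod, h⟩ <;> split_ifs <;>
    first
    | exact .inl (.inl (by omega)) | exact .inr (.inl (by omega))
    | exact .inl (.inr (.inl (by omega))) | exact .inr (.inr (.inl (by omega)))
    | exact .inl (.inr (.inr (by omega))) | exact .inr (.inr (.inr (by omega)))

theorem gnEdge_relabel_iff {n i j : ℕ} (hn : 2 ≤ n) (hi : i = 3 ∨ 5 ≤ i)
    (hj : j = 3 ∨ 5 ≤ j) (hi' : i + 2 ≤ 3 * n) (hj' : j + 2 ≤ 3 * n) :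
    GnEdge (n - 1) (relabel n i) (relabel n j) ∨ GnEdge (n - 1) (relabel n j) (relabel n i) ↔
      GnEdge n i j ∨ GnEdge n j i := by
  constructor
  · rintro (h | h)
    · have := gnEdge_unrelabel_of_gnEdge hn (relabel_add_six_le hn hj') h
      rwa [unrelabel_relabel hn hi hi', unrelabel_relabel hn hj hj'] at this
    · have := gnEdge_unrelabel_of_gnEdge hn (relabel_add_six_le hn hi') h
      rwa [unrelabel_relabel hn hi hi', unrelabel_relabel hn hj hj', or_comm] at this
  · rintro (h | h)
    · exact gnEdge_relabel_of_gnEdge hn hi hj hj' h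
    · exact (gnEdge_relabel_of_gnEdge hn hj hi hi' h).symm

def relabelEquiv {n : ℕ} (hn : 2 ≤ n) :
    {v : Fin (3 * n - 1) // v.1 = 3 ∨ 5 ≤ v.1} ≃ Fin (3 * (n - 1) - 2) where
  toFun v := ⟨relabel n v.1, by have := relabel_add_six_le hn (i := v.1.1) (by omega); omega⟩
  invFun p :=
    have h := unrelabel_bounds hn (p := p) (by omega)
    ⟨⟨unrelabel n p, by omega⟩, h.1⟩
  left_inv v := Subtype.ext (Fin.ext (unrelabel_relabel hn v.2 (by omega)))
  right_inv p := Fin.ext (relabel_unrelabel hn (by omega))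

/-- For `n ≥ 2`, the graph `(G_n)_{x_1 x_2} = G_n ∖ (N(x_1) ∪ N(x_2))`
is isomorphic to `H_{n-1}`.  (The vertex `x_i` is the element of `Fin (3n-1)`
with value `i - 1`.) -/
theorem stmt14 (n : ℕ) (hn : 2 ≤ n) :
    Nonempty ((Gn n).induce
      ((nbhd (Gn n) ⟨0, by omega⟩ ∪ nbhd (Gn n) ⟨1, by omega⟩)ᶜ) ≃g Hn (n - 1)) := by
  refine ⟨⟨(Equiv.subtypeEquivRight (mem_compl_nbhd_union_iff hn rfl rfl)).trans
    (relabelEquiv hn), ?_⟩⟩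
  rintro ⟨a, ha⟩ ⟨b, hb⟩
  rw [mem_compl_nbhd_union_iff hn rfl rfl] at ha hb
  rw [induce_adj, Hn_adj_iff, Gn_adj_iff]
  exact gnEdge_relabel_iff hn ha hb (by omega) (by omega)
end
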